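/- det(M^s) = M_{11} · M_{22} · ... · M_{nn}, i.e., the determinant of the sequential matrix of M equals the product of the diagonal entries of M. -/

import Mathlib

/-- The sequential mapping `M^↓`: for `i = 0,...,n-1` in order, perform the
in-place assignment `x_i := ∑ j, M i j * x j` on the (partially updated) vector. -/
def seqMap {K : Type*} [Field K] {n : ℕ} (M : Matrix (Fin n) (Fin n) K)
    (x : Fin n → K) : Fin n → K :=
  Fin.foldl n (fun v i => Function.update v i (∑ j, M i j * v j)) x

/-- The matrix `M^s` of the sequential mapping of `M`. -/
def seqMat {K : Type*} [Field K] {n : ℕ} (M : Matrix (Fin n) (Fin n) K) :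
    Matrix (Fin n) (Fin n) K :=
  fun i j => seqMap M (Pi.single j 1) i

/-- `F_i`: the identity matrix with `i`-th row replaced by the `i`-th row of `M`. -/
def Fmat {K : Type*} [Field K] {n : ℕ} (M : Matrix (Fin n) (Fin n) K) (i : Fin n) :
    Matrix (Fin n) (Fin n) K :=
  (1 : Matrix (Fin n) (Fin n) K).updateRow i (M i)

/-! Each in-place update `x_i := ∑ j, M i j * x j` is multiplication by `F_i`, so
`M^s = F_n ⋯ F_1`; and `det F_i = M i i`, since `F_i` differs from the identity only in row `i`. -/

open Matrix

section

variable {R m : Type*} [Fintype m] [DecidableEq m]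

theorem Matrix.one_updateRow_mulVec [NonAssocSemiring R] (i : m) (r v : m → R) :
    (1 : Matrix m m R).updateRow i r *ᵥ v = Function.update v i (r ⬝ᵥ v) := by
  rw [updateRow_mulVec, one_mulVec]

theorem Matrix.det_one_updateRow [CommRing R] (i : m) (r : m → R) :
    ((1 : Matrix m m R).updateRow i r).det = r i := by
  have hr : r = ∑ j, r j • (1 : Matrix m m R) j := by
    ext k
    simp [one_apply]
  conv_lhs => rw [hr]
  rw [det_updateRow_sum, det_one, smul_eq_mul, mul_one]

theorem Fin.foldl_mulVec [Semiring R] {n : ℕ} (A : Fin n → Matrix m m R) (x : m → R) :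
    Fin.foldl n (fun v i => A i *ᵥ v) x = (List.ofFn A).reverse.prod *ᵥ x := by
  induction n generalizing x with
  | zero => simp
  | succ k ih =>
    rw [Fin.foldl_succ, ih, List.ofFn_succ, List.reverse_cons, List.prod_append,
      List.prod_singleton, mulVec_mulVec]

end

section

variable {K : Type*} [Field K] {n : ℕ}

theorem seqMap_eq_mulVec (M : Matrix (Fin n) (Fin n) K) (x : Fin n → K) :
    seqMap M x = (List.ofFn (Fmat M)).reverse.prod *ᵥ x := by
  rw [seqMap, ← Fin.foldl_mulVec]
  simp only [Fmat, one_updateRow_mulVec, dotProduct]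

theorem seqMat_eq_prod_Fmat (M : Matrix (Fin n) (Fin n) K) :
    seqMat M = (List.ofFn (Fmat M)).reverse.prod := by
  ext i j
  rw [seqMat, seqMap_eq_mulVec, mulVec_single_one, col_apply]

theorem det_Fmat (M : Matrix (Fin n) (Fin n) K) (i : Fin n) : (Fmat M i).det = M i i :=
  det_one_updateRow i (M i)

end

/-- `det (M^s)` equals the product of the diagonal entries of `M`. -/
theorem stmt6 {K : Type*} [Field K] {n : ℕ} (M : Matrix (Fin n) (Fin n) K) :
    (seqMat M).det = ∏ i, M i i := by
  rw [seqMat_eq_prod_Fmat, ← coe_detMonoidHom, map_list_prod, List.map_reverse,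
    List.prod_reverse, List.map_ofFn, List.prod_ofFn]
  simp only [Function.comp_def, coe_detMonoidHom, det_Fmat]
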